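/- Let f : ℝ^d → ℝ be twice continuously differentiable with λmin·I ⪯ ∇²f(x) ⪯ λmax·I for all x and L-Lipschitz Hessian, with unique minimizer x*, and let β ∈ (0,1/2). Suppose x ∈ N_ν, H̃ is a symmetric matrix with (1-ψ)H(x) ⪯ H̃ ⪯ (1+ψ)H(x), and p = -H̃⁻¹∇f(x), where 0 < ν ≤ (2/3)(1/2 - β) and 0 < ψ ≤ (1/2 - β)/(3/2 - β). Then ‖x + p - x*‖_{H*} ≤ 3(ν + ψ)·‖x - x*‖_{H*}; in particular this yields a linear contraction whenever 3(ν + ψ) < 1. -/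

import Mathlib

open Real
open scoped BigOperators Matrix

/-- Spectral norm (ℓ₂ operator norm) of a real matrix. -/
noncomputable def specNorm {d : ℕ} (A : Matrix (Fin d) (Fin d) ℝ) : ℝ :=
  ‖Matrix.toEuclideanCLM (𝕜 := ℝ) A‖

/-- Euclidean (ℓ₂) norm of a vector. -/
noncomputable def vnorm {d : ℕ} (v : Fin d → ℝ) : ℝ := Real.sqrt (∑ i, v i ^ 2)

/-- The norm ‖v‖_A = √(vᵀAv) induced by a positive semidefinite matrix A. -/
noncomputable def Mnorm {d : ℕ} (A : Matrix (Fin d) (Fin d) ℝ) (v : Fin d → ℝ) : ℝ :=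
  Real.sqrt (dotProduct v (A.mulVec v))

/-!
Write `e = x - x*`, `A = H(x*)`, `K = H(x)` and `p = e - H̃⁻¹ ∇f(x)`, so that
`H̃ p = (H̃ - K) e + (K e - ∇f(x))`. Testing this identity against `p` gives
`(1 - ψ)(1 - ν) ‖p‖_A² ≤ pᵀ H̃ p ≤ (ψ (1 + ν) + ν) ‖p‖_A ‖e‖_A`.
Inside `N_ν` the Lipschitz Hessian makes `K` a `(1 ± ν)`-approximation of `A`. This gives the
lower bound and dominates the form of `H̃ - K` by `ψ (1 + ν) A`, which a Cauchy–Schwarz argument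
turns into the bound on the first term. The second term is a Taylor remainder of size `L ‖e‖²`,
which inside `N_ν` is at most `ν ‖e‖_A` against unit vectors of `‖·‖_A`. Dividing by `‖p‖_A`
leaves a factor that is at most `3 (ν + ψ)` because `ν, ψ ≤ 1/3`.
-/

open Matrix

section QuadraticForms

variable {n : Type*} [Fintype n]

theorem dotProduct_self_nonneg (v : n → ℝ) : 0 ≤ v ⬝ᵥ v := by
  simpa using dotProduct_star_self_nonneg v

theorem dotProduct_mulVec_le_of_posSemidef_sub {A B : Matrix n n ℝ} (h : (B - A).PosSemidef)
    (v : n → ℝ) : v ⬝ᵥ A *ᵥ v ≤ v ⬝ᵥ B *ᵥ v := by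
  have := h.dotProduct_mulVec_nonneg v
  simp only [star_trivial, sub_mulVec, dotProduct_sub, sub_nonneg] at this
  exact this

theorem dotProduct_mulVec_comm {A : Matrix n n ℝ} (hA : A.IsSymm) (u w : n → ℝ) :
    u ⬝ᵥ A *ᵥ w = w ⬝ᵥ A *ᵥ u := by
  simpa [hA.eq] using dotProduct_transpose_mulVec A u w

theorem two_mul_dotProduct_mulVec_le {A D : Matrix n n ℝ} {a : ℝ} (hD : D.IsSymm)
    (h : ∀ v, |v ⬝ᵥ D *ᵥ v| ≤ a * (v ⬝ᵥ A *ᵥ v)) (u w : n → ℝ) :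
    2 * (u ⬝ᵥ D *ᵥ w) ≤ a * (u ⬝ᵥ A *ᵥ u + w ⬝ᵥ A *ᵥ w) := by
  have hplus := (abs_le.1 (h (u + w))).2
  have hminus := (abs_le.1 (h (u - w))).1
  simp only [mulVec_add, mulVec_sub, dotProduct_add, dotProduct_sub, add_dotProduct,
    sub_dotProduct, dotProduct_mulVec_comm hD w u] at hplus hminus
  linear_combination (hplus + hminus) / 2

theorem isUnit_det_of_mul_dotProduct_self_le [DecidableEq n] {M : Matrix n n ℝ} {μ : ℝ}
    (hμ : 0 < μ) (h : ∀ v, μ * (v ⬝ᵥ v) ≤ v ⬝ᵥ M *ᵥ v) : IsUnit M.det := by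
  rw [← isUnit_iff_isUnit_det, ← mulVec_injective_iff_isUnit]
  intro v w hvw
  have hle := h (v - w)
  rw [mulVec_sub, hvw, sub_self, dotProduct_zero] at hle
  have hself : (v - w) ⬝ᵥ (v - w) = 0 :=
    le_antisymm (nonpos_of_mul_nonpos_right hle hμ) (dotProduct_self_nonneg _)
  exact sub_eq_zero.1 (dotProduct_self_eq_zero.1 hself)

variable {A K M : Matrix n n ℝ} {ψ ν : ℝ}

theorem one_sub_mul_one_sub_mul_dotProduct_mulVec_le (hψ : ψ ≤ 1)
    (hM : (M - (1 - ψ) • K).PosSemidef) (hK : ∀ v, |v ⬝ᵥ (K - A) *ᵥ v| ≤ ν * (v ⬝ᵥ A *ᵥ v))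
    (v : n → ℝ) : (1 - ψ) * (1 - ν) * (v ⬝ᵥ A *ᵥ v) ≤ v ⬝ᵥ M *ᵥ v := by
  have hMK := dotProduct_mulVec_le_of_posSemidef_sub hM v
  have hKA := (abs_le.1 (hK v)).1
  simp only [smul_mulVec, dotProduct_smul, smul_eq_mul, sub_mulVec, dotProduct_sub] at hMK hKA
  nlinarith

theorem abs_dotProduct_sub_mulVec_le_of_posSemidef (hψ : 0 ≤ ψ)
    (hM₁ : (M - (1 - ψ) • K).PosSemidef) (hM₂ : ((1 + ψ) • K - M).PosSemidef)
    (hK : ∀ v, |v ⬝ᵥ (K - A) *ᵥ v| ≤ ν * (v ⬝ᵥ A *ᵥ v)) (v : n → ℝ) :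
    |v ⬝ᵥ (M - K) *ᵥ v| ≤ ψ * (1 + ν) * (v ⬝ᵥ A *ᵥ v) := by
  have hlo := dotProduct_mulVec_le_of_posSemidef_sub hM₁ v
  have hup := dotProduct_mulVec_le_of_posSemidef_sub hM₂ v
  have hKA := (abs_le.1 (hK v)).2
  simp only [smul_mulVec, dotProduct_smul, smul_eq_mul, sub_mulVec, dotProduct_sub]
    at hlo hup hKA ⊢
  rw [abs_le]
  constructor <;> nlinarith

end QuadraticForms

section Norms

variable {d : ℕ}

theorem vnorm_nonneg (v : Fin d → ℝ) : 0 ≤ vnorm v := Real.sqrt_nonneg _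

theorem Mnorm_nonneg (A : Matrix (Fin d) (Fin d) ℝ) (v : Fin d → ℝ) : 0 ≤ Mnorm A v :=
  Real.sqrt_nonneg _

theorem vnorm_eq_norm_toLp (v : Fin d → ℝ) : vnorm v = ‖WithLp.toLp 2 v‖ := by
  simp [vnorm, EuclideanSpace.norm_eq]

theorem vnorm_eq_sqrt_dotProduct (v : Fin d → ℝ) : vnorm v = √(v ⬝ᵥ v) := by
  simp [vnorm, dotProduct, sq]

theorem vnorm_sq (v : Fin d → ℝ) : vnorm v ^ 2 = v ⬝ᵥ v := by
  rw [vnorm_eq_sqrt_dotProduct, Real.sq_sqrt (dotProduct_self_nonneg v)]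

theorem vnorm_smul (c : ℝ) (v : Fin d → ℝ) : vnorm (c • v) = |c| * vnorm v := by
  simp [vnorm_eq_norm_toLp, norm_smul]

theorem abs_dotProduct_mulVec_le (A : Matrix (Fin d) (Fin d) ℝ) (u w : Fin d → ℝ) :
    |u ⬝ᵥ A *ᵥ w| ≤ vnorm u * specNorm A * vnorm w := by
  have h :=
    abs_real_inner_le_norm (WithLp.toLp 2 u) (toEuclideanCLM (𝕜 := ℝ) A (WithLp.toLp 2 w))
  rw [toEuclideanCLM_toLp, EuclideanSpace.inner_toLp_toLp, star_trivial, dotProduct_comm] at h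
  rw [vnorm_eq_norm_toLp, vnorm_eq_norm_toLp, mul_assoc, specNorm]
  refine h.trans (mul_le_mul_of_nonneg_left ?_ (norm_nonneg _))
  simpa using (toEuclideanCLM (𝕜 := ℝ) A).le_opNorm (WithLp.toLp 2 w)

theorem sqrt_mul_vnorm_le_Mnorm {A : Matrix (Fin d) (Fin d) ℝ} {μ : ℝ}
    (hA : ∀ v, μ * (v ⬝ᵥ v) ≤ v ⬝ᵥ A *ᵥ v) (v : Fin d → ℝ) : √μ * vnorm v ≤ Mnorm A v := by
  rw [vnorm_eq_sqrt_dotProduct, ← Real.sqrt_mul' _ (dotProduct_self_nonneg v)]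
  exact Real.sqrt_le_sqrt (hA v)

theorem mul_vnorm_le_of_Mnorm_le {A : Matrix (Fin d) (Fin d) ℝ} {μ L ν : ℝ} (hμ : 0 < μ)
    (hL : 0 < L) (hA : ∀ v, μ * (v ⬝ᵥ v) ≤ v ⬝ᵥ A *ᵥ v) {e : Fin d → ℝ}
    (he : Mnorm A e ≤ ν * μ ^ ((3 : ℝ) / 2) / L) : L * vnorm e ≤ ν * μ := by
  have hpow : μ ^ ((3 : ℝ) / 2) = μ * √μ := by
    rw [show (3 : ℝ) / 2 = 1 + 1 / 2 by norm_num, Real.rpow_add hμ, Real.rpow_one,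
      Real.sqrt_eq_rpow]
  have h := (sqrt_mul_vnorm_le_Mnorm hA e).trans he
  rw [hpow, le_div_iff₀ hL] at h
  refine le_of_mul_le_mul_left ?_ (Real.sqrt_pos.2 hμ)
  linear_combination h

theorem abs_dotProduct_sub_mulVec_le_of_specNorm_le {A B : Matrix (Fin d) (Fin d) ℝ} {μ ν : ℝ}
    (hν : 0 ≤ ν) (hAB : specNorm (A - B) ≤ ν * μ) (hB : ∀ v, μ * (v ⬝ᵥ v) ≤ v ⬝ᵥ B *ᵥ v)
    (v : Fin d → ℝ) :
    |v ⬝ᵥ (A - B) *ᵥ v| ≤ ν * (v ⬝ᵥ B *ᵥ v) :=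
  calc |v ⬝ᵥ (A - B) *ᵥ v|
      ≤ vnorm v * specNorm (A - B) * vnorm v := abs_dotProduct_mulVec_le _ _ _
    _ ≤ vnorm v * (ν * μ) * vnorm v := by gcongr <;> exact vnorm_nonneg v
    _ = ν * (μ * (v ⬝ᵥ v)) := by rw [← vnorm_sq]; ring
    _ ≤ ν * (v ⬝ᵥ B *ᵥ v) := by gcongr; exact hB v

theorem abs_dotProduct_mulVec_le_mul_Mnorm {A D : Matrix (Fin d) (Fin d) ℝ} {a : ℝ}
    (hD : D.IsSymm) (ha : 0 < a) (h : ∀ v, |v ⬝ᵥ D *ᵥ v| ≤ a * (v ⬝ᵥ A *ᵥ v))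
    (u w : Fin d → ℝ) : |u ⬝ᵥ D *ᵥ w| ≤ a * Mnorm A u * Mnorm A w := by
  have hA : ∀ v, 0 ≤ v ⬝ᵥ A *ᵥ v := fun v =>
    nonneg_of_mul_nonneg_right ((abs_nonneg _).trans (h v)) ha
  have hquad : ∀ t : ℝ, 0 ≤ (a * (u ⬝ᵥ A *ᵥ u)) * (t * t) + (-2 * (u ⬝ᵥ D *ᵥ w)) * t
      + a * (w ⬝ᵥ A *ᵥ w) := by
    intro t
    have := two_mul_dotProduct_mulVec_le hD h (t • u) w
    simp only [mulVec_smul, smul_dotProduct, dotProduct_smul, smul_eq_mul] at this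
    linarith
  have hdisc := discrim_le_zero hquad
  rw [discrim] at hdisc
  refine abs_le_of_sq_le_sq ?_ (mul_nonneg (mul_nonneg ha.le (Mnorm_nonneg A u)) (Mnorm_nonneg A w))
  rw [mul_pow, mul_pow, Mnorm, Mnorm, Real.sq_sqrt (hA u), Real.sq_sqrt (hA w)]
  linarith

/-- An inexact Newton step `e ↦ e - M⁻¹ γ`: `M` approximates `K` relative to `A`, and `K e - γ`
is the linearization residual. -/
theorem Mnorm_sub_nonsing_inv_mulVec_le {A K M : Matrix (Fin d) (Fin d) ℝ} {e γ : Fin d → ℝ}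
    {a b c : ℝ} (hK : K.IsSymm) (hM : M.IsSymm) (hMdet : IsUnit M.det) (hc : 0 < c)
    (ha : 0 < a) (hb : 0 ≤ b) (hlow : ∀ v, c * (v ⬝ᵥ A *ᵥ v) ≤ v ⬝ᵥ M *ᵥ v)
    (hMK : ∀ v, |v ⬝ᵥ (M - K) *ᵥ v| ≤ a * (v ⬝ᵥ A *ᵥ v))
    (hres : ∀ u, |u ⬝ᵥ (K *ᵥ e - γ)| ≤ b * Mnorm A u * Mnorm A e) :
    Mnorm A (e - M⁻¹ *ᵥ γ) ≤ (a + b) / c * Mnorm A e := by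
  set p := e - M⁻¹ *ᵥ γ
  have hA : 0 ≤ p ⬝ᵥ A *ᵥ p := nonneg_of_mul_nonneg_right ((abs_nonneg _).trans (hMK p)) ha
  have hMp : M *ᵥ p = (M - K) *ᵥ e + (K *ᵥ e - γ) := by
    rw [mulVec_sub, mulVec_mulVec, mul_nonsing_inv _ hMdet, one_mulVec, sub_mulVec]
    abel
  have hkey : c * Mnorm A p * Mnorm A p ≤ (a + b) * Mnorm A e * Mnorm A p :=
    calc c * Mnorm A p * Mnorm A p = c * (p ⬝ᵥ A *ᵥ p) := by
          rw [mul_assoc, Mnorm, Real.mul_self_sqrt hA]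
      _ ≤ p ⬝ᵥ (M - K) *ᵥ e + p ⬝ᵥ (K *ᵥ e - γ) := by
          rw [← dotProduct_add, ← hMp]
          exact hlow p
      _ ≤ a * Mnorm A p * Mnorm A e + b * Mnorm A p * Mnorm A e := by
          gcongr
          · exact (le_abs_self _).trans
              (abs_dotProduct_mulVec_le_mul_Mnorm (hM.sub hK) ha hMK p e)
          · exact (le_abs_self _).trans (hres p)
      _ = (a + b) * Mnorm A e * Mnorm A p := by ring
  rcases (Mnorm_nonneg A p).eq_or_lt with hp | hp
  · rw [← hp]
    exact mul_nonneg (by positivity) (Mnorm_nonneg A e)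
  · rw [div_mul_eq_mul_div, le_div_iff₀ hc, mul_comm]
    exact le_of_mul_le_mul_right hkey hp

end Norms

section Taylor

variable {d : ℕ} {f : (Fin d → ℝ) → ℝ} {H : (Fin d → ℝ) → Matrix (Fin d) (Fin d) ℝ}

theorem hasDerivAt_fderiv_apply_along_line (hf : ContDiff ℝ 2 f)
    (hhess : ∀ y u v, fderiv ℝ (fun z => fderiv ℝ f z v) y u = u ⬝ᵥ H y *ᵥ v)
    (a e u : Fin d → ℝ) (t : ℝ) :
    HasDerivAt (fun s : ℝ => fderiv ℝ f (a + s • e) u) (e ⬝ᵥ H (a + t • e) *ᵥ u) t := by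
  have hdiff : Differentiable ℝ (fun z => fderiv ℝ f z u) :=
    ((hf.fderiv_right (m := 1) (by norm_num)).differentiable (by norm_num)).clm_apply
      (differentiable_const u)
  have hline : HasDerivAt (fun s : ℝ => a + s • e) e t := by
    simpa using ((hasDerivAt_id t).smul_const e).const_add a
  rw [← hhess]
  exact (hdiff _).hasFDerivAt.comp_hasDerivAt t hline

theorem abs_fderiv_sub_fderiv_sub_dotProduct_le {L : ℝ} (hf : ContDiff ℝ 2 f)
    (hhess : ∀ y u v, fderiv ℝ (fun z => fderiv ℝ f z v) y u = u ⬝ᵥ H y *ᵥ v)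
    (hL : 0 ≤ L) (hLip : ∀ y z, specNorm (H y - H z) ≤ L * vnorm (y - z))
    (a b u : Fin d → ℝ) :
    |fderiv ℝ f b u - fderiv ℝ f a u - (b - a) ⬝ᵥ H b *ᵥ u| ≤
      L * vnorm (b - a) ^ 2 * vnorm u := by
  set e := b - a
  have hderiv : ∀ t : ℝ,
      HasDerivAt (fun s : ℝ => fderiv ℝ f (a + s • e) u - s * (e ⬝ᵥ H b *ᵥ u))
        (e ⬝ᵥ (H (a + t • e) - H b) *ᵥ u) t := by
    intro t
    rw [sub_mulVec, dotProduct_sub]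
    exact (hasDerivAt_fderiv_apply_along_line hf hhess a e u t).sub (hasDerivAt_mul_const _)
  have hbound : ∀ t ∈ Set.Ico (0 : ℝ) 1,
      ‖e ⬝ᵥ (H (a + t • e) - H b) *ᵥ u‖ ≤ L * vnorm e ^ 2 * vnorm u := by
    intro t ht
    have hdist : vnorm (a + t • e - b) ≤ vnorm e := by
      rw [show a + t • e - b = (t - 1) • e by simp only [e, sub_smul, one_smul]; abel,
        vnorm_smul]
      exact mul_le_of_le_one_left (vnorm_nonneg e)
        (abs_le.2 ⟨by linarith [ht.1], by linarith [ht.2]⟩)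
    calc ‖e ⬝ᵥ (H (a + t • e) - H b) *ᵥ u‖
        ≤ vnorm e * specNorm (H (a + t • e) - H b) * vnorm u :=
          abs_dotProduct_mulVec_le _ _ _
      _ ≤ vnorm e * (L * vnorm e) * vnorm u := by
          gcongr
          · exact vnorm_nonneg _
          · exact vnorm_nonneg _
          · exact (hLip _ _).trans (by gcongr)
      _ = L * vnorm e ^ 2 * vnorm u := by ring
  convert norm_image_sub_le_of_norm_deriv_le_segment_01'
    (fun t _ => (hderiv t).hasDerivWithinAt) hbound using 2
  simp [e]
  ring_nf

theorem abs_dotProduct_hessian_mulVec_sub_gradient_le {g : (Fin d → ℝ) → Fin d → ℝ}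
    {L μ ν : ℝ} {x xstar : Fin d → ℝ} (hf : ContDiff ℝ 2 f)
    (hgrad : ∀ y v, fderiv ℝ f y v = g y ⬝ᵥ v)
    (hhess : ∀ y u v, fderiv ℝ (fun z => fderiv ℝ f z v) y u = u ⬝ᵥ H y *ᵥ v)
    (hL : 0 ≤ L) (hLip : ∀ y z, specNorm (H y - H z) ≤ L * vnorm (y - z))
    (hsym : (H x).IsSymm) (hcrit : fderiv ℝ f xstar = 0) (hμ : 0 ≤ μ)
    (hHs : ∀ v, μ * (v ⬝ᵥ v) ≤ v ⬝ᵥ H xstar *ᵥ v) (hν : 0 ≤ ν)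
    (hclose : L * vnorm (x - xstar) ≤ ν * μ) (u : Fin d → ℝ) :
    |u ⬝ᵥ (H x *ᵥ (x - xstar) - g x)| ≤
      ν * Mnorm (H xstar) u * Mnorm (H xstar) (x - xstar) := by
  set e := x - xstar
  have htaylor := abs_fderiv_sub_fderiv_sub_dotProduct_le hf hhess hL hLip xstar x u
  rw [hcrit, hgrad, _root_.zero_apply, sub_zero, ← dotProduct_mulVec_comm hsym] at htaylor
  calc |u ⬝ᵥ (H x *ᵥ e - g x)| = |g x ⬝ᵥ u - u ⬝ᵥ H x *ᵥ e| := by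
        rw [dotProduct_sub, abs_sub_comm, dotProduct_comm]
    _ ≤ L * vnorm e * vnorm e * vnorm u := by rw [mul_assoc L, ← sq]; exact htaylor
    _ ≤ ν * μ * vnorm e * vnorm u := by gcongr <;> exact vnorm_nonneg _
    _ = ν * (√μ * vnorm u) * (√μ * vnorm e) := by
        linear_combination -(ν * vnorm e * vnorm u) * Real.mul_self_sqrt hμ
    _ ≤ ν * Mnorm (H xstar) u * Mnorm (H xstar) e := by
        gcongr
        · exact mul_nonneg (Real.sqrt_nonneg _) (vnorm_nonneg _)
        · exact mul_nonneg hν (Real.sqrt_nonneg _)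
        · exact sqrt_mul_vnorm_le_Mnorm hHs u
        · exact sqrt_mul_vnorm_le_Mnorm hHs e

end Taylor

/-- Both factors of the denominator are at least `2/3`, and `ψ ν ≤ ν / 3`. -/
theorem contraction_factor_le {ν ψ : ℝ} (hν₀ : 0 ≤ ν) (hν : ν ≤ 1 / 3) (hψ₀ : 0 ≤ ψ)
    (hψ : ψ ≤ 1 / 3) : (ψ * (1 + ν) + ν) / ((1 - ψ) * (1 - ν)) ≤ 3 * (ν + ψ) := by
  have hden : 4 / 9 ≤ (1 - ψ) * (1 - ν) := by nlinarith
  rw [div_le_iff₀ (by linarith)]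
  nlinarith [mul_le_mul_of_nonneg_left hden (add_nonneg hν₀ hψ₀),
    mul_le_mul_of_nonneg_left hψ hν₀]

theorem stmt8_general
    {d : ℕ} (f : (Fin d → ℝ) → ℝ) (g : (Fin d → ℝ) → Fin d → ℝ)
    (H : (Fin d → ℝ) → Matrix (Fin d) (Fin d) ℝ)
    (lmin L : ℝ) (hlmin : 0 < lmin) (hL : 0 < L)
    (hf : ContDiff ℝ 2 f)
    (hgrad : ∀ y v, fderiv ℝ f y v = dotProduct (g y) v)
    (hhess : ∀ y u v, fderiv ℝ (fun z => fderiv ℝ f z v) y u =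
      dotProduct u ((H y).mulVec v))
    (hHsym : ∀ y, (H y).IsSymm)
    (hlow : ∀ y, (H y - lmin • (1 : Matrix (Fin d) (Fin d) ℝ)).PosSemidef)
    (hLip : ∀ y z, specNorm (H y - H z) ≤ L * vnorm (y - z))
    (xstar : Fin d → ℝ) (hmin : ∀ y, f xstar ≤ f y)
    (β ν ψ : ℝ) (hβ0 : 0 < β)
    (hν0 : 0 < ν) (hν : ν ≤ (2 / 3) * (1 / 2 - β))
    (hψ0 : 0 < ψ) (hψ : ψ ≤ (1 / 2 - β) / (3 / 2 - β))
    (x : Fin d → ℝ) (hx : Mnorm (H xstar) (x - xstar) ≤ ν * lmin ^ ((3 : ℝ) / 2) / L)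
    (Ht : Matrix (Fin d) (Fin d) ℝ) (hHtsym : Ht.IsSymm)
    (hHt1 : (Ht - (1 - ψ) • H x).PosSemidef)
    (hHt2 : ((1 + ψ) • H x - Ht).PosSemidef) :
    Mnorm (H xstar) (x + -(Ht⁻¹.mulVec (g x)) - xstar) ≤
      3 * (ν + ψ) * Mnorm (H xstar) (x - xstar) := by
  have hν₃ : ν ≤ 1 / 3 := by linarith
  have hψ₃ : ψ ≤ 1 / 3 := hψ.trans (by rw [div_le_iff₀ (by linarith)]; linarith)
  have hc : 0 < (1 - ψ) * (1 - ν) := mul_pos (by linarith) (by linarith)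
  have hHs : ∀ v, lmin * (v ⬝ᵥ v) ≤ v ⬝ᵥ H xstar *ᵥ v := fun v => by
    simpa [smul_mulVec] using dotProduct_mulVec_le_of_posSemidef_sub (hlow xstar) v
  have hclose := mul_vnorm_le_of_Mnorm_le hlmin hL hHs hx
  have hK :=
    abs_dotProduct_sub_mulVec_le_of_specNorm_le hν0.le ((hLip x xstar).trans hclose) hHs
  have hHt := one_sub_mul_one_sub_mul_dotProduct_mulVec_le (by linarith) hHt1 hK
  have hdet : IsUnit Ht.det := isUnit_det_of_mul_dotProduct_self_le (mul_pos hc hlmin)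
    fun v => by rw [mul_assoc]; exact (mul_le_mul_of_nonneg_left (hHs v) hc.le).trans (hHt v)
  have hcrit : fderiv ℝ f xstar = 0 :=
    IsLocalMin.fderiv_eq_zero (Filter.Eventually.of_forall hmin)
  have hres := abs_dotProduct_hessian_mulVec_sub_gradient_le hf hgrad hhess hL.le hLip
    (hHsym x) hcrit hlmin.le hHs hν0.le hclose
  calc Mnorm (H xstar) (x + -(Ht⁻¹ *ᵥ g x) - xstar)
      = Mnorm (H xstar) ((x - xstar) - Ht⁻¹ *ᵥ g x) := by congr 1; abel
    _ ≤ (ψ * (1 + ν) + ν) / ((1 - ψ) * (1 - ν)) * Mnorm (H xstar) (x - xstar) :=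
        Mnorm_sub_nonsing_inv_mulVec_le (hHsym x) hHtsym hdet hc (by positivity) hν0.le hHt
          (abs_dotProduct_sub_mulVec_le_of_posSemidef hψ0.le hHt1 hHt2 hK) hres
    _ ≤ 3 * (ν + ψ) * Mnorm (H xstar) (x - xstar) := by
        gcongr
        · exact Mnorm_nonneg _ _
        · exact contraction_factor_le hν0.le hν₃ hψ0.le hψ₃

/-- Corollary on local linear convergence: the Newton step with an
approximate Hessian contracts the error by a factor 3(ν + ψ). -/
theorem stmt8
    {d : ℕ} (f : (Fin d → ℝ) → ℝ) (g : (Fin d → ℝ) → Fin d → ℝ)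
    (H : (Fin d → ℝ) → Matrix (Fin d) (Fin d) ℝ)
    (lmin lmax L : ℝ) (hlmin : 0 < lmin) (hlle : lmin ≤ lmax) (hL : 0 < L)
    (hf : ContDiff ℝ 2 f)
    (hgrad : ∀ y v, fderiv ℝ f y v = dotProduct (g y) v)
    (hhess : ∀ y u v, fderiv ℝ (fun z => fderiv ℝ f z v) y u =
      dotProduct u ((H y).mulVec v))
    (hHsym : ∀ y, (H y).IsSymm)
    (hpsd : ∀ y, (H y).PosSemidef)
    (hlow : ∀ y, (H y - lmin • (1 : Matrix (Fin d) (Fin d) ℝ)).PosSemidef)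
    (hup : ∀ y, (lmax • (1 : Matrix (Fin d) (Fin d) ℝ) - H y).PosSemidef)
    (hLip : ∀ y z, specNorm (H y - H z) ≤ L * vnorm (y - z))
    (xstar : Fin d → ℝ) (hmin : ∀ y, f xstar ≤ f y)
    (huniq : ∀ y, (∀ z, f y ≤ f z) → y = xstar)
    (β ν ψ : ℝ) (hβ0 : 0 < β) (hβ : β < 1 / 2)
    (hν0 : 0 < ν) (hν : ν ≤ (2 / 3) * (1 / 2 - β))
    (hψ0 : 0 < ψ) (hψ : ψ ≤ (1 / 2 - β) / (3 / 2 - β))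
    (x : Fin d → ℝ) (hx : Mnorm (H xstar) (x - xstar) ≤ ν * lmin ^ ((3 : ℝ) / 2) / L)
    (Ht : Matrix (Fin d) (Fin d) ℝ) (hHtsym : Ht.IsSymm)
    (hHt1 : (Ht - (1 - ψ) • H x).PosSemidef)
    (hHt2 : ((1 + ψ) • H x - Ht).PosSemidef) :
    Mnorm (H xstar) (x + -(Ht⁻¹.mulVec (g x)) - xstar) ≤
      3 * (ν + ψ) * Mnorm (H xstar) (x - xstar) :=
  stmt8_general f g H lmin L hlmin hL hf hgrad hhess hHsym hlow hLip xstar hmin β ν ψ hβ0 hν0 hν hψ0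
    hψ x hx Ht hHtsym hHt1 hHt2
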